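/- Let G be a ℚ-vector space with internal direct sum decomposition G = Q ⊕ W, and λ an infinite cardinal. If X is a ℚ-subspace of W^λ with W^λ = W^{<λ} ⊕ X, then G^λ = (G^{<λ} + Q^λ) ⊕ X, where G^{<λ} is the subspace of boundedly supported functions and Q^λ the functions valued in Q. -/
import Mathlib


/-- The subspace `G^{<λ}` of boundedly-supported functions. -/
def bddSupp (ι G : Type*) [LinearOrder ι] [Nonempty ι] [AddCommGroup G] [Module ℚ G] :
    Submodule ℚ (ι → G) where
  carrier := {x | ∃ α, ∀ i, α ≤ i → x i = 0}
  zero_mem' := ⟨Classical.arbitrary ι, fun _ _ => rfl⟩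
  add_mem' := by
    rintro a b ⟨α, ha⟩ ⟨β, hb⟩
    exact ⟨max α β, fun i hi => by
      simp [Pi.add_apply, ha i ((le_max_left α β).trans hi),
        hb i ((le_max_right α β).trans hi)]⟩
  smul_mem' := by
    rintro q a ⟨α, ha⟩
    exact ⟨α, fun i hi => by simp [ha i hi]⟩

/-- Let `G` be a `ℚ`-vector space with internal direct sum `G = Q ⊕ W` and `λ` an
infinite (well-ordered) index.  If `X` is a `ℚ`-subspace of `W^λ` with
`W^λ = W^{<λ} ⊕ X`, then `G^λ = (G^{<λ} + Q^λ) ⊕ X`. -/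
theorem stmt8 {G ι : Type*} [AddCommGroup G] [Module ℚ G]
    [LinearOrder ι] [Infinite ι]
    (Q W : Submodule ℚ G) (hcompl : IsCompl Q W)
    (X : Submodule ℚ (ι → G))
    (hXW : X ≤ Submodule.pi Set.univ fun _ => W)
    (hsum : ((Submodule.pi Set.univ fun _ => W) ⊓ bddSupp ι G) ⊔ X
      = Submodule.pi Set.univ fun _ => W)
    (hdisj : ((Submodule.pi Set.univ fun _ => W) ⊓ bddSupp ι G) ⊓ X = ⊥) :
    IsCompl (bddSupp ι G ⊔ Submodule.pi Set.univ fun _ => Q) X := by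
  constructor
  · -- disjoint
    rw [disjoint_iff, eq_bot_iff]
    rintro y ⟨hy1, hy2⟩
    obtain ⟨b, hb, q, hq, hbq⟩ := Submodule.mem_sup.mp hy1
    obtain ⟨α, hα⟩ := hb
    have hyW : ∀ i, y i ∈ W := fun i => hXW hy2 i trivial
    have hybdd : y ∈ bddSupp ι G := by
      refine ⟨α, fun i hi => ?_⟩
      have hyi : y i = q i := by
        rw [← hbq]; simp [hα i hi]
      have : y i ∈ Q ⊓ W := ⟨hyi ▸ hq i trivial, hyW i⟩
      rwa [hcompl.inf_eq_bot, Submodule.mem_bot] at this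
    have : y ∈ ((Submodule.pi Set.univ fun _ => W) ⊓ bddSupp ι G) ⊓ X :=
      ⟨⟨fun i _ => hyW i, hybdd⟩, hy2⟩
    rw [hdisj] at this
    exact this
  · -- codisjoint
    rw [codisjoint_iff, eq_top_iff]
    intro g _
    have h1 : ∀ i, g i ∈ Q ⊔ W := fun i => by rw [hcompl.sup_eq_top]; trivial
    choose q hq w hw hqw using fun i => Submodule.mem_sup.mp (h1 i)
    have hwW : w ∈ (Submodule.pi Set.univ fun _ => W : Submodule ℚ (ι → G)) :=
      fun i _ => hw i
    rw [← hsum] at hwW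
    obtain ⟨b, hb, x, hx, hbx⟩ := Submodule.mem_sup.mp hwW
    refine Submodule.mem_sup.mpr ⟨b + q, ?_, x, hx, ?_⟩
    · exact Submodule.add_mem _ (Submodule.mem_sup_left hb.2)
        (Submodule.mem_sup_right (fun i _ => hq i))
    · funext i
      have h2 := congrFun hbx i
      simp only [Pi.add_apply] at h2 ⊢
      rw [← hqw i, ← h2]; abel
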